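/- arXiv:1312.5408 — 10 statements merged into one kernel-verified Lean document; each statement's English description precedes it below -/
import Mathlib

section
/- Let X be a collection of random variables on a common probability space taking values in a common state space. Define δ(A), for finite A ⊆ X, to be the probability that the random variables in A do not all take the same value. Then (X, δ) is a diversity. -/
/-!
If some `b ∈ B` agrees with every variable of `A ∪ B` and with every variable of `B ∪ C`,
then all variables of `A ∪ C` agree with `b`, hence with each other. So the event that `A ∪ C`
disagrees lies in the union of the events that `A ∪ B` and `B ∪ C` disagree, and the triangle
inequality follows from subadditivity of the measure.
-/

open MeasureTheory

/-- The S-diversity: `δ(A)` is the probability that the random variables indexed by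
`A` do not all take the same value. -/
noncomputable def sDiv {Ω S ι : Type*} [MeasurableSpace Ω] (μ : Measure Ω)
    (f : ι → Ω → S) (A : Finset ι) : ℝ :=
  (μ {ω | ¬ ∀ i ∈ A, ∀ j ∈ A, f i ω = f j ω}).toReal

section Disagreement

variable {Ω S ι : Type*} (f : ι → Ω → S)

def disagreement (A : Finset ι) : Set Ω :=
  {ω | ¬ ∀ i ∈ A, ∀ j ∈ A, f i ω = f j ω}

theorem sDiv_eq_measureReal_disagreement [MeasurableSpace Ω] (μ : Measure Ω) (A : Finset ι) :
    sDiv μ f A = μ.real (disagreement f A) :=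
  rfl

theorem disagreement_eq_empty_of_card_le_one {A : Finset ι} (hA : A.card ≤ 1) :
    disagreement f A = ∅ := by
  ext ω
  simpa [disagreement] using fun i hi j hj => congrArg (f · ω) (Finset.card_le_one.mp hA i hi j hj)

theorem disagreement_union_subset [DecidableEq ι] (A : Finset ι) {B : Finset ι} (C : Finset ι)
    (hB : B.Nonempty) :
    disagreement f (A ∪ C) ⊆ disagreement f (A ∪ B) ∪ disagreement f (B ∪ C) := by
  obtain ⟨b, hb⟩ := hB
  intro ω hω
  by_contra h
  simp only [disagreement, Set.mem_union, Set.mem_ofPred_eq, not_or, not_not] at h hω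
  obtain ⟨hAB, hBC⟩ := h
  have agrees_b : ∀ k ∈ A ∪ C, f k ω = f b ω := by
    intro k hk
    rcases Finset.mem_union.mp hk with hkA | hkC
    · exact hAB k (Finset.mem_union_left _ hkA) b (Finset.mem_union_right _ hb)
    · exact hBC k (Finset.mem_union_right _ hkC) b (Finset.mem_union_left _ hb)
  exact hω fun i hi j hj => (agrees_b i hi).trans (agrees_b j hj).symm

variable [MeasurableSpace Ω] (μ : Measure Ω)

theorem sDiv_eq_zero_of_card_le_one {A : Finset ι} (hA : A.card ≤ 1) : sDiv μ f A = 0 := by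
  rw [sDiv_eq_measureReal_disagreement, disagreement_eq_empty_of_card_le_one f hA,
    measureReal_empty]

theorem sDiv_union_le [IsFiniteMeasure μ] [DecidableEq ι] (A : Finset ι) {B : Finset ι}
    (C : Finset ι) (hB : B.Nonempty) :
    sDiv μ f (A ∪ C) ≤ sDiv μ f (A ∪ B) + sDiv μ f (B ∪ C) :=
  (measureReal_mono (disagreement_union_subset f A C hB)).trans (measureReal_union_le _ _)

end Disagreement

theorem sDiv_is_diversity_general {Ω S ι : Type*} [MeasurableSpace Ω] (μ : Measure Ω)
    [IsProbabilityMeasure μ] [DecidableEq ι] (f : ι → Ω → S) :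
    (∀ A : Finset ι, 0 ≤ sDiv μ f A) ∧
    (∀ A : Finset ι, A.card ≤ 1 → sDiv μ f A = 0) ∧
    (∀ A B C : Finset ι, B.Nonempty →
      sDiv μ f (A ∪ C) ≤ sDiv μ f (A ∪ B) + sDiv μ f (B ∪ C)) :=
  ⟨fun _ => measureReal_nonneg, fun _ => sDiv_eq_zero_of_card_le_one f μ,
    fun A _ C => sDiv_union_le f μ A C⟩

/-- the S-diversity of a family of random variables on a common
probability space is a diversity. -/
theorem sDiv_is_diversity {Ω S ι : Type*} [MeasurableSpace Ω] (μ : Measure Ω)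
    [IsProbabilityMeasure μ] [DecidableEq ι] (f : ι → Ω → S)
    (hmeas : ∀ i j : ι, MeasurableSet {ω | f i ω = f j ω}) :
    (∀ A : Finset ι, 0 ≤ sDiv μ f A) ∧
    (∀ A : Finset ι, A.card ≤ 1 → sDiv μ f A = 0) ∧
    (∀ A B C : Finset ι, B.Nonempty →
      sDiv μ f (A ∪ C) ≤ sDiv μ f (A ∪ B) + sDiv μ f (B ∪ C)) :=
  sDiv_is_diversity_general μ f
end

section
/- Let (M, Σ, μ) be a measure space and let X be the collection of sets in Σ of finite measure. For a finite collection {E₁, …, E_k} ⊆ X define δ({E₁,…,E_k}) = μ(⋃ᵢ Eᵢ \ ⋂ᵢ Eᵢ) (and δ(∅) = 0). Then (X, δ) is a diversity (allowing δ(A) = 0 for |A| > 1). -/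
/-!
A point lies in `(⋃ A) \ (⋂ A)` when it belongs to some member of `A` and misses another. Take
such a point `x` for `A ∪ C` and fix `b ∈ B`. If `x ∈ b`, the member that `x` misses lies in `A`
or in `C`, which puts `x` in the set for `A ∪ B` or for `B ∪ C`; if `x ∉ b`, the member containing
`x` does the same. So the set for `A ∪ C` is covered by those for `A ∪ B` and `B ∪ C`, and
subadditivity of `μ` gives the triangle inequality.
-/

open MeasureTheory

/-- The measure diversity: for a finite collection of finite-measure sets,
`δ({E₁,…,E_k}) = μ(⋃ᵢ Eᵢ \ ⋂ᵢ Eᵢ)` (and `δ(∅) = 0`). -/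
noncomputable def measureDiv {M : Type*} [MeasurableSpace M] (μ : Measure M)
    (A : Finset {E : Set M // MeasurableSet E ∧ μ E < ⊤}) : ℝ :=
  (μ ((⋃ E ∈ A, (E : Set M)) \ ⋂ E ∈ A, (E : Set M))).toReal

namespace Set

variable {ι α : Type*} (f : ι → Set α)

theorem biUnion_diff_biInter_eq_empty {S : Set ι} (hS : S.Subsingleton) :
    (⋃ i ∈ S, f i) \ ⋂ i ∈ S, f i = ∅ := by
  refine eq_empty_of_forall_notMem fun x ⟨hx_union, hx_inter⟩ => ?_
  simp only [mem_iUnion, mem_iInter, not_forall, exists_prop] at hx_union hx_inter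
  obtain ⟨i, hi, hxi⟩ := hx_union
  obtain ⟨j, hj, hxj⟩ := hx_inter
  exact hxj (hS hi hj ▸ hxi)

theorem biUnion_diff_biInter_union_subset {S T U : Set ι} (hT : T.Nonempty) :
    (⋃ i ∈ S ∪ U, f i) \ ⋂ i ∈ S ∪ U, f i ⊆
      ((⋃ i ∈ S ∪ T, f i) \ ⋂ i ∈ S ∪ T, f i) ∪ ((⋃ i ∈ T ∪ U, f i) \ ⋂ i ∈ T ∪ U, f i) := by
  obtain ⟨b, hb⟩ := hT
  rintro x ⟨hx_union, hx_inter⟩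
  simp only [mem_union, mem_sdiff, mem_iUnion, mem_iInter, not_forall, exists_prop] at *
  obtain ⟨i, hi, hxi⟩ := hx_union
  obtain ⟨j, hj, hxj⟩ := hx_inter
  by_cases hxb : x ∈ f b
  · rcases hj with hj | hj
    · exact .inl ⟨⟨b, .inr hb, hxb⟩, j, .inl hj, hxj⟩
    · exact .inr ⟨⟨b, .inl hb, hxb⟩, j, .inr hj, hxj⟩
  · rcases hi with hi | hi
    · exact .inl ⟨⟨i, .inl hi, hxi⟩, b, .inr hb, hxb⟩
    · exact .inr ⟨⟨i, .inr hi, hxi⟩, b, .inl hb, hxb⟩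

end Set

theorem measure_biUnion_diff_biInter_ne_top {M : Type*} [MeasurableSpace M] {μ : Measure M}
    (A : Finset {E : Set M // MeasurableSet E ∧ μ E < ⊤}) :
    μ ((⋃ E ∈ A, (E : Set M)) \ ⋂ E ∈ A, (E : Set M)) ≠ ⊤ :=
  measure_ne_top_of_subset Set.sdiff_subset
    (measure_biUnion_lt_top A.finite_toSet fun E _ => E.2.2).ne

/-- the measure diversity is a diversity (with the relaxed
condition D1) on the collection of finite-measure sets. -/
theorem measureDiv_is_diversity {M : Type*} [MeasurableSpace M] (μ : Measure M)
    [DecidableEq {E : Set M // MeasurableSet E ∧ μ E < ⊤}] :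
    (∀ A, 0 ≤ measureDiv μ A) ∧
    (∀ A, A.card ≤ 1 → measureDiv μ A = 0) ∧
    (∀ A B C, B.Nonempty →
      measureDiv μ (A ∪ C) ≤ measureDiv μ (A ∪ B) + measureDiv μ (B ∪ C)) := by
  refine ⟨fun A => ENNReal.toReal_nonneg, fun A hA => ?_, fun A B C hB => ?_⟩
  · have h_empty := Set.biUnion_diff_biInter_eq_empty Subtype.val
      (Finset.card_le_one_iff_subsingleton.1 hA)
    simp only [Finset.mem_coe] at h_empty
    simp [measureDiv, h_empty]
  · have h_subset := Set.biUnion_diff_biInter_union_subset Subtype.val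
      (S := ↑A) (U := ↑C) (Finset.coe_nonempty.2 hB)
    simp only [← Finset.coe_union, Finset.mem_coe] at h_subset
    have hAB := measure_biUnion_diff_biInter_ne_top (A ∪ B)
    have hBC := measure_biUnion_diff_biInter_ne_top (B ∪ C)
    rw [measureDiv, measureDiv, measureDiv, ← ENNReal.toReal_add hAB hBC]
    exact ENNReal.toReal_mono (ENNReal.add_ne_top.2 ⟨hAB, hBC⟩)
      ((measure_mono h_subset).trans (measure_union_le _ _))
end

section
/- Let H = (V, E) be a hypergraph with non-negative edge weights w : E → ℝ≥0 such that every subset of V is covered by some connected set of edges. The hypergraph Steiner diversity δ_H — where δ_H(A) is the minimum total weight of a subset E' ⊆ E whose induced sub-hypergraph is connected and covers A — is the unique maximal diversity δ (under pointwise ordering) satisfying δ(A) ≤ w(A) for all A ∈ E; i.e., δ_H(A) ≤ w(A) for all A ∈ E, and any diversity δ with δ(A) ≤ w(A) for all A ∈ E satisfies δ(B) ≤ δ_H(B) for all finite B ⊆ V. -/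
/-!
Every edge `A ∈ E` is a connected cover of itself, so `δ_H(A) ≤ w(A)`. Conversely, let `δ` be
a diversity below `w` on edges and `E' ⊆ E` a connected cover of `B`. Diversities are
monotone, and `δ(X ∪ Y) ≤ δ(X) + δ(Y)` when `X` and `Y` meet (the triangle inequality through
a common point). Among the sub-collections `F ⊆ E'` with `δ(⋃ F) ≤ ∑_{e ∈ F} δ(e)`, one
covering the most vertices covers all of `⋃ E'`: otherwise connectivity yields an edge meeting
`⋃ F` and leaving it, and adding that edge keeps the inequality. Hence
`δ(B) ≤ δ(⋃ E') ≤ ∑_{e ∈ E'} δ(e) ≤ ∑_{e ∈ E'} w(e)`.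
-/

open Finset

structure Diversity (X : Type*) [DecidableEq X] where
  δ : Finset X → ℝ
  nonneg : ∀ A : Finset X, 0 ≤ δ A
  eq_zero_of_card_le_one : ∀ A : Finset X, A.card ≤ 1 → δ A = 0
  triangle : ∀ A B C : Finset X, B.Nonempty → δ (A ∪ C) ≤ δ (A ∪ B) + δ (B ∪ C)

/-- The set of vertices covered by a collection of hyperedges. -/
def edgeUnion {V : Type*} [DecidableEq V] (E' : Finset (Finset V)) : Finset V :=
  E'.biUnion id

/-- A collection of hyperedges is connected if its vertex union cannot be split
into two nonempty parts with no hyperedge meeting both. -/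
def HConnected {V : Type*} [DecidableEq V] (E' : Finset (Finset V)) : Prop :=
  ∀ S : Finset V, (S ∩ edgeUnion E').Nonempty → (edgeUnion E' \ S).Nonempty →
    ∃ e ∈ E', (e ∩ S).Nonempty ∧ (e \ S).Nonempty

/-- The hypergraph Steiner diversity: the minimum total weight of a connected
sub-collection of hyperedges covering `A`. -/
noncomputable def steinerHDiv {V : Type*} [DecidableEq V] (E : Finset (Finset V))
    (w : Finset V → ℝ) (A : Finset V) : ℝ :=
  sInf {x : ℝ | ∃ E' ⊆ E, HConnected E' ∧ A ⊆ edgeUnion E' ∧ x = ∑ e ∈ E', w e}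

namespace Diversity

variable {X : Type*} [DecidableEq X] (D : Diversity X)

theorem le_insert (a : X) (A : Finset X) : D.δ A ≤ D.δ (insert a A) := by
  have h := D.triangle ∅ {a} A (singleton_nonempty a)
  rwa [empty_union, empty_union, D.eq_zero_of_card_le_one {a} (card_singleton a).le, zero_add,
    ← insert_eq] at h

theorem le_union (A s : Finset X) : D.δ A ≤ D.δ (A ∪ s) := by
  induction s using Finset.induction_on with
  | empty => rw [union_empty]
  | insert a s _ ih => exact ih.trans (union_insert a A s ▸ D.le_insert a (A ∪ s))

theorem monotone : Monotone D.δ := fun A B h => union_eq_right.2 h ▸ D.le_union A B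

theorem union_le_add {A B : Finset X} (h : (A ∩ B).Nonempty) :
    D.δ (A ∪ B) ≤ D.δ A + D.δ B := by
  obtain ⟨x, hx⟩ := h
  have h := D.triangle A {x} B (singleton_nonempty x)
  rwa [union_eq_left.2 (singleton_subset_iff.2 (mem_inter.1 hx).1),
    union_eq_right.2 (singleton_subset_iff.2 (mem_inter.1 hx).2)] at h

end Diversity

section Hypergraph

variable {V : Type*} [DecidableEq V]

theorem mem_edgeUnion {E' : Finset (Finset V)} {v : V} :
    v ∈ edgeUnion E' ↔ ∃ e ∈ E', v ∈ e := by
  simp [edgeUnion]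

theorem edgeUnion_singleton (e : Finset V) : edgeUnion {e} = e := by
  simp [edgeUnion]

theorem edgeUnion_insert (e : Finset V) (F : Finset (Finset V)) :
    edgeUnion (insert e F) = edgeUnion F ∪ e := by
  rw [edgeUnion, biUnion_insert, union_comm, id]
  rfl

theorem edgeUnion_mono {F E' : Finset (Finset V)} (h : F ⊆ E') : edgeUnion F ⊆ edgeUnion E' :=
  biUnion_subset_biUnion_of_subset_left _ h

theorem hConnected_singleton (e : Finset V) : HConnected {e} := by
  intro S hS hSc
  rw [edgeUnion_singleton] at hS hSc
  exact ⟨e, mem_singleton_self e, inter_comm S e ▸ hS, hSc⟩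

theorem Diversity.δ_edgeUnion_le_sum (D : Diversity V) {E' : Finset (Finset V)}
    (hc : HConnected E') : D.δ (edgeUnion E') ≤ ∑ e ∈ E', D.δ e := by
  rcases (edgeUnion E').eq_empty_or_nonempty with hU | ⟨v, hv⟩
  · rw [hU, D.eq_zero_of_card_le_one ∅ (by simp)]
    exact sum_nonneg fun e _ => D.nonneg e
  set candidates := E'.powerset.filter fun F =>
    (edgeUnion F).Nonempty ∧ D.δ (edgeUnion F) ≤ ∑ e ∈ F, D.δ e
  obtain ⟨e₀, he₀, hve₀⟩ := mem_edgeUnion.1 hv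
  have h_singleton : ({e₀} : Finset (Finset V)) ∈ candidates := by
    simp only [candidates, mem_filter, mem_powerset, singleton_subset_iff, edgeUnion_singleton,
      sum_singleton]
    exact ⟨he₀, ⟨v, hve₀⟩, le_rfl⟩
  obtain ⟨F, hF, hmax⟩ :=
    candidates.exists_max_image (fun F => #(edgeUnion F)) ⟨_, h_singleton⟩
  simp only [candidates, mem_filter, mem_powerset] at hF hmax
  obtain ⟨hFE, hFne, hFδ⟩ := hF
  have h_cover : edgeUnion F = edgeUnion E' := by
    refine (edgeUnion_mono hFE).antisymm fun y hy => ?_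
    by_contra hyF
    obtain ⟨e, heE, hmeet, ⟨z, hz⟩⟩ := hc (edgeUnion F)
      (by rwa [inter_eq_left.2 (edgeUnion_mono hFE)]) ⟨y, mem_sdiff.2 ⟨hy, hyF⟩⟩
    obtain ⟨hze, hzF⟩ := mem_sdiff.1 hz
    have heF : e ∉ F := fun heF => hzF (mem_edgeUnion.2 ⟨e, heF, hze⟩)
    have h_larger : #(edgeUnion F) < #(edgeUnion (insert e F)) := by
      rw [edgeUnion_insert]
      exact card_lt_card <|
        (ssubset_iff_of_subset subset_union_left).2 ⟨z, mem_union_right _ hze, hzF⟩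
    have h_sub : D.δ (edgeUnion (insert e F)) ≤ ∑ f ∈ insert e F, D.δ f := by
      rw [edgeUnion_insert, sum_insert heF]
      linarith [D.union_le_add (inter_comm e _ ▸ hmeet)]
    refine h_larger.not_ge (hmax _ ⟨insert_subset heE hFE, ?_, h_sub⟩)
    exact hFne.mono (edgeUnion_mono (subset_insert e F))
  calc D.δ (edgeUnion E') = D.δ (edgeUnion F) := by rw [h_cover]
    _ ≤ ∑ e ∈ F, D.δ e := hFδ
    _ ≤ ∑ e ∈ E', D.δ e := sum_le_sum_of_subset_of_nonneg hFE fun e _ _ => D.nonneg e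

theorem steinerHDiv_le_sum {E E' : Finset (Finset V)} {w : Finset V → ℝ} {A : Finset V}
    (hw : ∀ e ∈ E, 0 ≤ w e) (hE' : E' ⊆ E) (hc : HConnected E') (hA : A ⊆ edgeUnion E') :
    steinerHDiv E w A ≤ ∑ e ∈ E', w e := by
  refine csInf_le ⟨0, ?_⟩ ⟨E', hE', hc, hA, rfl⟩
  rintro _ ⟨F, hF, -, -, rfl⟩
  exact sum_nonneg fun e he => hw e (hF he)

theorem le_steinerHDiv {E : Finset (Finset V)} {w : Finset V → ℝ} {A : Finset V} {c : ℝ}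
    (hcov : ∃ E' ⊆ E, HConnected E' ∧ A ⊆ edgeUnion E')
    (h : ∀ E' ⊆ E, HConnected E' → A ⊆ edgeUnion E' → c ≤ ∑ e ∈ E', w e) :
    c ≤ steinerHDiv E w A := by
  obtain ⟨E', hE', hc, hA⟩ := hcov
  refine le_csInf ⟨_, E', hE', hc, hA, rfl⟩ ?_
  rintro _ ⟨F, hF, hc, hA, rfl⟩
  exact h F hF hc hA

end Hypergraph

/-- the hypergraph Steiner diversity is the unique maximal diversity
`δ` with `δ(A) ≤ w(A)` for all hyperedges `A`: it satisfies this bound, and it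
dominates every diversity satisfying the bound. -/
theorem steinerHDiv_maximal {V : Type*} [DecidableEq V] (E : Finset (Finset V))
    (w : Finset V → ℝ) (hw : ∀ e ∈ E, 0 ≤ w e)
    (hcov : ∀ A : Finset V, ∃ E' ⊆ E, HConnected E' ∧ A ⊆ edgeUnion E') :
    (∀ A ∈ E, steinerHDiv E w A ≤ w A) ∧
    (∀ D : Diversity V, (∀ A ∈ E, D.δ A ≤ w A) →
      ∀ B : Finset V, D.δ B ≤ steinerHDiv E w B) := by
  refine ⟨fun A hA => ?_, fun D hD B => le_steinerHDiv (hcov B) fun E' hE' hc hB => ?_⟩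
  · simpa using steinerHDiv_le_sum hw (singleton_subset_iff.2 hA) (hConnected_singleton A)
      (edgeUnion_singleton A).ge
  · calc D.δ B ≤ D.δ (edgeUnion E') := D.monotone hB
      _ ≤ ∑ e ∈ E', D.δ e := D.δ_edgeUnion_le_sum hc
      _ ≤ ∑ e ∈ E', w e := sum_le_sum fun e he => hD e (hE' he)
end

section
/- Let (X, δ) be a diversity with induced metric d(a,b) = δ({a,b}), let δ_diam be the diameter diversity of d and δ_S the Steiner diversity of d. Then for all finite A ⊆ X: δ_diam(A) ≤ δ(A) ≤ δ_S(A) ≤ (|A| − 1)·δ_diam(A) (the last inequality when A is nonempty). -/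
/-! Monotonicity of a diversity gives `δ_diam ≤ δ`, and `δ` is itself one of the diversities in
the supremum defining `δ_S`. For the last bound, the triangle inequality with a one-point middle
set `{a₀}` bounds any diversity on `A ∋ a₀` by the sum of its values on the pairs `{a₀, a}`;
for a diversity dominated by `δ` on pairs, each of these `|A| - 1` terms is at most
`δ_diam(A)`. -/

open Finset

/-- The diameter diversity of the metric induced by a diversity:
`δ_diam(A) = max_{a,b∈A} δ({a,b})`. -/
noncomputable def diamDiv {X : Type*} [DecidableEq X] (D : Diversity X)
    (A : Finset X) : ℝ :=
  if h : A.Nonempty then (A ×ˢ A).sup' (h.product h) (fun p => D.δ {p.1, p.2}) else 0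

/-- The Steiner diversity of the induced metric, characterized as the maximal
diversity dominated on pairs by the induced metric. -/
noncomputable def steinerDiv {X : Type*} [DecidableEq X] (D : Diversity X)
    (A : Finset X) : ℝ :=
  sSup {x : ℝ | ∃ D' : Diversity X, (∀ a b : X, D'.δ {a, b} ≤ D.δ {a, b}) ∧ x = D'.δ A}

namespace Diversity

variable {X : Type*} [DecidableEq X] (D : Diversity X)

theorem δ_singleton (x : X) : D.δ {x} = 0 :=
  D.eq_zero_of_card_le_one _ (card_singleton x).le

theorem δ_le_δ_insert (A : Finset X) (x : X) : D.δ A ≤ D.δ (insert x A) := by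
  have h := D.triangle ∅ {x} A (singleton_nonempty x)
  rwa [empty_union, empty_union, δ_singleton, zero_add, ← insert_eq] at h

theorem δ_mono {A B : Finset X} (h : A ⊆ B) : D.δ A ≤ D.δ B := by
  have δ_le_δ_union : ∀ C : Finset X, D.δ A ≤ D.δ (C ∪ A) := by
    intro C
    induction C using Finset.induction_on with
    | empty => rw [empty_union]
    | insert x C _ ih => exact (insert_union x C A ▸ ih.trans (D.δ_le_δ_insert _ x))
  simpa only [union_eq_left.mpr h] using δ_le_δ_union B

theorem δ_insert_le_add {A : Finset X} {a : X} (ha : a ∈ A) (b : X) :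
    D.δ (insert b A) ≤ D.δ A + D.δ {a, b} := by
  have h := D.triangle A {a} {b} (singleton_nonempty a)
  rwa [union_singleton, union_singleton, insert_eq_of_mem ha, ← insert_eq] at h

theorem δ_insert_le_sum (a₀ : X) (C : Finset X) :
    D.δ (insert a₀ C) ≤ ∑ c ∈ C, D.δ {a₀, c} := by
  induction C using Finset.induction_on with
  | empty => simp only [insert_empty, δ_singleton, sum_empty, le_refl]
  | insert c C hc ih =>
    rw [insert_comm, sum_insert hc]
    linarith [D.δ_insert_le_add (mem_insert_self a₀ C) c]

end Diversity

section

variable {X : Type*} [DecidableEq X]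

theorem δ_pair_le_diamDiv (D : Diversity X) {A : Finset X} {a b : X} (ha : a ∈ A) (hb : b ∈ A) :
    D.δ {a, b} ≤ diamDiv D A := by
  rw [diamDiv, dif_pos ⟨a, ha⟩]
  exact le_sup' (fun p : X × X => D.δ {p.1, p.2}) (mk_mem_product ha hb)

theorem diamDiv_le_δ (D : Diversity X) (A : Finset X) : diamDiv D A ≤ D.δ A := by
  rw [diamDiv]
  split_ifs with hA
  · refine sup'_le _ _ fun p hp => D.δ_mono ?_
    obtain ⟨h₁, h₂⟩ := mem_product.mp hp
    exact insert_subset h₁ (singleton_subset_iff.mpr h₂)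
  · exact D.nonneg A

-- For `A = ∅` the factor `#A - 1` is `-1`, but both sides vanish.
theorem δ_le_card_sub_one_mul_diamDiv {D D' : Diversity X}
    (hD' : ∀ a b : X, D'.δ {a, b} ≤ D.δ {a, b}) (A : Finset X) :
    D'.δ A ≤ ((#A : ℝ) - 1) * diamDiv D A := by
  rcases A.eq_empty_or_nonempty with rfl | ⟨a₀, ha₀⟩
  · simpa [diamDiv] using (D'.eq_zero_of_card_le_one ∅ (by simp)).le
  calc D'.δ A = D'.δ (insert a₀ (A.erase a₀)) := by rw [insert_erase ha₀]
    _ ≤ ∑ a ∈ A.erase a₀, D'.δ {a₀, a} := D'.δ_insert_le_sum a₀ _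
    _ ≤ #(A.erase a₀) • diamDiv D A := sum_le_card_nsmul _ _ _ fun a ha =>
        (hD' a₀ a).trans (δ_pair_le_diamDiv D ha₀ (mem_of_mem_erase ha))
    _ = ((#A : ℝ) - 1) * diamDiv D A := by
        rw [card_erase_of_mem ha₀, nsmul_eq_mul, Nat.cast_pred (card_pos.mpr ⟨a₀, ha₀⟩)]

theorem steinerDiv_le_card_sub_one_mul_diamDiv (D : Diversity X) (A : Finset X) :
    steinerDiv D A ≤ ((#A : ℝ) - 1) * diamDiv D A :=
  csSup_le ⟨D.δ A, D, fun _ _ => le_rfl, rfl⟩ fun _ ⟨_, hD', hx⟩ =>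
    hx ▸ δ_le_card_sub_one_mul_diamDiv hD' A

theorem δ_le_steinerDiv (D : Diversity X) (A : Finset X) : D.δ A ≤ steinerDiv D A :=
  le_csSup ⟨_, fun _ ⟨_, hD', hx⟩ => hx ▸ δ_le_card_sub_one_mul_diamDiv hD' A⟩
    ⟨D, fun _ _ => le_rfl, rfl⟩

end

/-- `δ_diam(A) ≤ δ(A) ≤ δ_S(A) ≤ (|A| − 1)·δ_diam(A)`. -/
theorem diversity_between_diam_and_steiner {X : Type*} [DecidableEq X]
    (D : Diversity X) (A : Finset X) :
    diamDiv D A ≤ D.δ A ∧ D.δ A ≤ steinerDiv D A ∧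
    (A.Nonempty → steinerDiv D A ≤ ((A.card : ℝ) - 1) * diamDiv D A) :=
  ⟨diamDiv_le_δ D A, δ_le_steinerDiv D A, fun _ => steinerDiv_le_card_sub_one_mul_diamDiv D A⟩
end

section
/- If (X, δ) is an L₁-embeddable diversity with induced metric d(a,b) = δ({a,b}), then for every finite A = {a₁, …, a_k} ⊆ X, (k − 1)·δ(A) ≤ Σ_{1 ≤ i < j ≤ k} d(aᵢ, aⱼ). -/
open Finset MeasureTheory

noncomputable def pairSup {X Ω : Type*} (φ : X → Ω → ℝ) (A : Finset X) (ω : Ω) : ℝ :=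
  if h : A.Nonempty then (A ×ˢ A).sup' (h.product h) (fun p => |φ p.1 ω - φ p.2 ω|) else 0

def IsL1Embeddable {X : Type*} [DecidableEq X] (D : Diversity X) : Prop :=
  ∃ (Ω : Type) (_ : MeasurableSpace Ω) (μ : Measure Ω) (φ : X → Ω → ℝ),
    (∀ x : X, Integrable (φ x) μ) ∧
    ∀ A : Finset X, D.δ A = ∫ ω, pairSup φ A ω ∂μ

/-! Fix a sample point ω of the L₁ embedding φ. Then `pairSup φ A ω` is the diameter
`|φ p ω - φ q ω|` of the real numbers `φ a ω`, `a ∈ A`, attained at some `p, q ∈ A`. Summing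
the triangle inequality `d(p,q) ≤ d(p,c) + d(c,q)` over `c ∈ A` bounds the rows `p` and `q` of
the distance matrix together by `|A|·d(p,q)`, and every other row is at least `d(p,q)`; hence
`(|A| - 1)·d(p,q) ≤ ½ ∑∑ d`. Integrating over ω gives the theorem. -/

theorem card_sub_one_mul_dist_le_sum_dist {ι M : Type*} [PseudoMetricSpace M] [DecidableEq ι]
    (x : ι → M) {A : Finset ι} {p q : ι} (hp : p ∈ A) (hq : q ∈ A) :
    ((#A : ℝ) - 1) * dist (x p) (x q) ≤ (1 / 2) * ∑ a ∈ A, ∑ b ∈ A, dist (x a) (x b) := by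
  rcases eq_or_ne p q with rfl | hpq
  · simp only [dist_self, mul_zero]
    positivity
  set d := dist (x p) (x q)
  set r : ι → ℝ := fun a => ∑ b ∈ A, dist (x a) (x b)
  have hpq_sub : {p, q} ⊆ A := insert_subset hp (singleton_subset_iff.2 hq)
  have hrow : ∀ a ∈ A, d ≤ r a := fun a _ =>
    calc d ≤ dist (x a) (x p) + dist (x a) (x q) := dist_triangle_left _ _ _
      _ ≤ r a := add_le_sum (fun _ _ => dist_nonneg) hp hq hpq
  have hends : (#A : ℝ) * d ≤ r p + r q := by
    rw [← sum_add_distrib, ← nsmul_eq_mul]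
    exact card_nsmul_le_sum _ _ _ fun c _ => dist_triangle_right _ _ (x c)
  have hrest : ((#A : ℝ) - 2) * d ≤ ∑ a ∈ A \ {p, q}, r a := by
    rw [show (#A : ℝ) - 2 = #(A \ {p, q}) by rw [cast_card_sdiff hpq_sub, card_pair hpq]; norm_num,
      ← nsmul_eq_mul]
    exact card_nsmul_le_sum _ _ _ fun a ha => hrow a (sdiff_subset ha)
  have hsplit : ∑ a ∈ A, r a = r p + r q + ∑ a ∈ A \ {p, q}, r a := by
    rw [← sum_sdiff hpq_sub, sum_pair hpq, add_comm]
  change _ ≤ 1 / 2 * ∑ a ∈ A, r a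
  linarith

section pairSup

variable {X Ω : Type*} (φ : X → Ω → ℝ)

theorem exists_pairSup_eq_abs_sub {A : Finset X} (hA : A.Nonempty) (ω : Ω) :
    ∃ p ∈ A, ∃ q ∈ A, pairSup φ A ω = |φ p ω - φ q ω| := by
  obtain ⟨⟨p, q⟩, hpq, h⟩ := exists_mem_eq_sup' (hA.product hA) fun p => |φ p.1 ω - φ p.2 ω|
  exact ⟨p, (mem_product.1 hpq).1, q, (mem_product.1 hpq).2, by rw [pairSup, dif_pos hA, h]⟩

theorem pairSup_pair [DecidableEq X] (a b : X) (ω : Ω) :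
    pairSup φ {a, b} ω = |φ a ω - φ b ω| := by
  obtain ⟨p, hp, q, hq, h⟩ := exists_pairSup_eq_abs_sub φ (insert_nonempty a {b}) ω
  refine h.trans (le_antisymm ?_ ?_)
  · simp only [mem_insert, mem_singleton] at hp hq
    rcases hp with rfl | rfl <;> rcases hq with rfl | rfl <;> simp [abs_sub_comm]
  · rw [← h, pairSup, dif_pos (insert_nonempty a {b})]
    exact le_sup' (fun p : X × X => |φ p.1 ω - φ p.2 ω|) (mk_mem_product (by simp) (by simp))

theorem card_sub_one_mul_pairSup_le [DecidableEq X] (A : Finset X) (ω : Ω) :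
    ((#A : ℝ) - 1) * pairSup φ A ω ≤ (1 / 2) * ∑ a ∈ A, ∑ b ∈ A, |φ a ω - φ b ω| := by
  rcases A.eq_empty_or_nonempty with rfl | hA
  · simp [pairSup]
  obtain ⟨p, hp, q, hq, h⟩ := exists_pairSup_eq_abs_sub φ hA ω
  simpa only [h, Real.dist_eq] using card_sub_one_mul_dist_le_sum_dist (φ · ω) hp hq

theorem card_sub_one_mul_pairSup_nonneg (A : Finset X) (ω : Ω) :
    0 ≤ ((#A : ℝ) - 1) * pairSup φ A ω := by
  rcases A.eq_empty_or_nonempty with rfl | hA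
  · simp [pairSup]
  obtain ⟨p, -, q, -, h⟩ := exists_pairSup_eq_abs_sub φ hA ω
  rw [h]
  exact mul_nonneg (sub_nonneg.2 (Nat.one_le_cast.2 hA.card_pos)) (abs_nonneg _)

end pairSup

/-- for an L₁-embeddable diversity with induced metric
`d(a,b) = δ({a,b})`, we have `(|A| − 1)·δ(A) ≤ ∑_{i<j} d(aᵢ,aⱼ)`
(the right-hand side being half the full double sum). -/
theorem l1_induced_metric_bound {X : Type*} [DecidableEq X] (D : Diversity X)
    (hD : IsL1Embeddable D) (A : Finset X) :
    ((A.card : ℝ) - 1) * D.δ A ≤ (1 / 2) * ∑ a ∈ A, ∑ b ∈ A, D.δ {a, b} := by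
  obtain ⟨Ω, _, μ, φ, hφ, hδ⟩ := hD
  have hdist : ∀ a b, Integrable (fun ω => |φ a ω - φ b ω|) μ :=
    fun a b => ((hφ a).sub (hφ b)).abs
  have hrow : ∀ a, Integrable (fun ω => ∑ b ∈ A, |φ a ω - φ b ω|) μ :=
    fun a => integrable_finsetSum _ fun b _ => hdist a b
  have hsum : ∑ a ∈ A, ∑ b ∈ A, D.δ {a, b} = ∫ ω, ∑ a ∈ A, ∑ b ∈ A, |φ a ω - φ b ω| ∂μ := by
    rw [integral_finsetSum _ fun a _ => hrow a]
    refine sum_congr rfl fun a _ => ?_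
    rw [integral_finsetSum _ fun b _ => hdist a b]
    simp only [hδ, pairSup_pair]
  rw [hδ, hsum, ← integral_const_mul, ← integral_const_mul]
  -- measurability of `pairSup φ A` is never established, so compare against a nonnegative integrand
  exact integral_mono_of_nonneg (.of_forall (card_sub_one_mul_pairSup_nonneg φ A))
    ((integrable_finsetSum _ fun a _ => hrow a).const_mul _)
    (.of_forall (card_sub_one_mul_pairSup_le φ A))
end

section
/- Every measure diversity is L₁-embeddable: if (M, Σ, μ) is a measure space and X is the collection of finite-measure sets in Σ with δ({E₁,…,E_k}) = μ(⋃ᵢ Eᵢ \ ⋂ᵢ Eᵢ), then the map E ↦ 𝟙_E into L₁(M, Σ, μ) satisfies δ({E₁,…,E_k}) = ∫ diam{𝟙_{E₁}(ω), …, 𝟙_{E_k}(ω)} dμ(ω) for every finite collection. -/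
/-! Since |𝟙_E − 𝟙_F| = 𝟙_{E ∆ F}, the integrand is the indicator of the union of all pairwise
symmetric differences of the Eᵢ, and a point lies in some Eᵢ ∆ Eⱼ exactly when it lies in ⋃ᵢ Eᵢ
but not in ⋂ᵢ Eᵢ. The integral of that indicator is the measure of ⋃ᵢ Eᵢ \ ⋂ᵢ Eᵢ. -/

open Finset MeasureTheory
open scoped symmDiff

theorem Finset.sup'_indicator_apply {ι α M : Type*} [SemilatticeSup M] [Zero M]
    (s : Finset ι) (hs : s.Nonempty) (g : ι → Set α) {f : α → M} (hf : 0 ≤ f) (x : α) :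
    s.sup' hs (fun i => (g i).indicator f x) = (⋃ i ∈ s, g i).indicator f x := by
  by_cases hx : x ∈ ⋃ i ∈ s, g i
  · obtain ⟨i, hi, hxi⟩ := Set.mem_iUnion₂.mp hx
    rw [Set.indicator_of_mem hx]
    refine le_antisymm (sup'_le _ _ fun j _ => Set.indicator_le_self' (fun y _ => hf y) x) ?_
    exact le_sup'_of_le _ hi (Set.indicator_of_mem hxi f).ge
  · have hxi : ∀ i ∈ s, x ∉ g i := fun i hi hxi => hx (Set.mem_biUnion hi hxi)
    rw [Set.indicator_of_notMem hx,
      sup'_congr hs rfl fun i hi => Set.indicator_of_notMem (hxi i hi) f, sup'_const]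

theorem Finset.biUnion_product_symmDiff {ι α : Type*} (s : Finset ι) (f : ι → Set α) :
    ⋃ p ∈ s ×ˢ s, f p.1 ∆ f p.2 = (⋃ i ∈ s, f i) \ ⋂ i ∈ s, f i := by
  ext x
  simp only [Set.mem_iUnion, Set.mem_sdiff, Set.mem_iInter, Set.mem_symmDiff, mem_product,
    Prod.exists, exists_prop, not_forall]
  constructor
  · rintro ⟨i, j, ⟨hi, hj⟩, ⟨hxi, hxj⟩ | ⟨hxj, hxi⟩⟩
    exacts [⟨⟨i, hi, hxi⟩, j, hj, hxj⟩, ⟨⟨j, hj, hxj⟩, i, hi, hxi⟩]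
  · rintro ⟨⟨i, hi, hxi⟩, j, hj, hxj⟩
    exact ⟨i, j, ⟨hi, hj⟩, Or.inl ⟨hxi, hxj⟩⟩

theorem Finset.sup'_abs_indicator_sub_indicator {ι α : Type*} (s : Finset ι) (hs : s.Nonempty)
    (f : ι → Set α) (x : α) :
    (s ×ˢ s).sup' (hs.product hs)
        (fun p => |(f p.1).indicator (1 : α → ℝ) x - (f p.2).indicator 1 x|) =
      ((⋃ i ∈ s, f i) \ ⋂ i ∈ s, f i).indicator 1 x := by
  have abs_indicator_one (t : Set α) : |t.indicator (1 : α → ℝ) x| = t.indicator 1 x :=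
    abs_of_nonneg (Set.indicator_nonneg (fun _ _ => zero_le_one) x)
  simp only [← Set.abs_indicator_symmDiff, abs_indicator_one]
  rw [sup'_indicator_apply _ _ _ zero_le_one, biUnion_product_symmDiff]

/-- every measure diversity is L₁-embeddable: the map `E ↦ 𝟙_E`
into `L₁(M, Σ, μ)` is an isometric embedding, i.e.
`μ(⋃ᵢEᵢ \ ⋂ᵢEᵢ) = ∫ diam{𝟙_{E₁}(ω), …, 𝟙_{E_k}(ω)} dμ(ω)`. -/
theorem measureDiv_l1_embeddable {M : Type*} [MeasurableSpace M] (μ : Measure M)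
    (A : Finset {E : Set M // MeasurableSet E ∧ μ E < ⊤}) :
    (μ ((⋃ E ∈ A, (E : Set M)) \ ⋂ E ∈ A, (E : Set M))).toReal =
      ∫ ω, (if h : A.Nonempty then
          (A ×ˢ A).sup' (h.product h)
            (fun p => |Set.indicator (p.1 : Set M) (fun _ => (1 : ℝ)) ω -
                        Set.indicator (p.2 : Set M) (fun _ => (1 : ℝ)) ω|)
        else 0) ∂μ := by
  have hS : MeasurableSet ((⋃ E ∈ A, (E : Set M)) \ ⋂ E ∈ A, (E : Set M)) :=
    .diff (.biUnion A.countable_toSet fun E _ => E.2.1)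
      (.biInter A.countable_toSet fun E _ => E.2.1)
  rw [← measureReal_def, ← integral_indicator_one hS]
  refine integral_congr_ae (ae_of_all _ fun ω => ?_)
  rcases A.eq_empty_or_nonempty with rfl | hA
  · simp
  · simp only [dif_pos hA]
    exact (sup'_abs_indicator_sub_indicator A hA _ ω).symm
end

section
/- Every L₁-embeddable diversity can be isometrically embedded into a measure diversity: given functions f in L₁(Ω, 𝒜, μ), the map Φ(f) = {(ω, y) : y ∈ [0, f(ω)] if f(ω) ≥ 0, y ∈ [f(ω), 0) if f(ω) < 0} into the product measure space (Ω × ℝ, μ × λ) satisfies δ₁({f₁,…,f_k}) = (μ×λ)(⋃ᵢ Φ(fᵢ) \ ⋂ᵢ Φ(fᵢ)) for every finite collection. -/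
/-!
Slicing `(⋃ᵢ Φ(fᵢ)) \ ⋂ᵢ Φ(fᵢ)` at `ω` gives `(⋃ᵢ φ(fᵢ ω)) \ ⋂ᵢ φ(fᵢ ω)`, a subset of `ℝ` squeezed
between the open and the closed interval from `minᵢ fᵢ ω` to `maxᵢ fᵢ ω`: a point strictly between
two values lies in exactly one of their `φ`-intervals (the one on its side of `0`), and a point lying
in one `φ`-interval but not in another lies between the two values. So the slice has Lebesgue measure
`maxᵢ fᵢ ω - minᵢ fᵢ ω`, and Tonelli turns this into the integral identity.
-/

open Finset MeasureTheory
open scoped symmDiff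

/-- `φ(x) = [0, x]` if `x ≥ 0` and `[x, 0)` if `x < 0`. -/
noncomputable def phiInterval (x : ℝ) : Set ℝ :=
  if 0 ≤ x then Set.Icc 0 x else Set.Ico x 0

/-- `Φ(f) = {(ω, y) : y ∈ φ(f(ω))} ⊆ Ω × ℝ`. -/
noncomputable def PhiSet {Ω : Type*} (f : Ω → ℝ) : Set (Ω × ℝ) :=
  {p : Ω × ℝ | p.2 ∈ phiInterval (f p.1)}

theorem Finset.measurable_inf' {δ α ι : Type*} [MeasurableSpace δ] [MeasurableSpace α]
    [SemilatticeInf α] [MeasurableInf₂ α] {s : Finset ι} (hs : s.Nonempty) {f : ι → δ → α}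
    (hf : ∀ i ∈ s, Measurable (f i)) : Measurable (s.inf' hs f) :=
  Finset.inf'_induction hs _ (fun _ hf _ hg => hf.inf hg) hf

lemma mem_phiInterval {x y : ℝ} : y ∈ phiInterval x ↔ 0 ≤ y ∧ y ≤ x ∨ x ≤ y ∧ y < 0 := by
  unfold phiInterval
  split_ifs <;> simp only [Set.mem_Icc, Set.mem_Ico] <;> grind

lemma mem_uIcc_of_mem_phiInterval_of_notMem {a b y : ℝ} (ha : y ∈ phiInterval a)
    (hb : y ∉ phiInterval b) : y ∈ Set.uIcc a b := by
  rw [mem_phiInterval] at ha hb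
  rw [Set.mem_uIcc]
  grind

lemma mem_phiInterval_symmDiff_of_mem_Ioo {a b y : ℝ} (hy : y ∈ Set.Ioo a b) :
    y ∈ phiInterval a ∆ phiInterval b := by
  rw [Set.mem_symmDiff, mem_phiInterval, mem_phiInterval]
  grind

lemma measurableSet_phiSet {Ω : Type*} [MeasurableSpace Ω] {f : Ω → ℝ} (hf : Measurable f) :
    MeasurableSet (PhiSet f) := by
  have hPhi : PhiSet f = {p : Ω × ℝ | 0 ≤ p.2 ∧ p.2 ≤ f p.1 ∨ f p.1 ≤ p.2 ∧ p.2 < 0} := by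
    ext p; exact mem_phiInterval
  rw [hPhi]
  exact ((measurableSet_le measurable_const measurable_snd).inter
      (measurableSet_le measurable_snd (hf.comp measurable_fst))).union
    ((measurableSet_le (hf.comp measurable_fst) measurable_snd).inter
      (measurableSet_lt measurable_snd measurable_const))

lemma Real.volume_eq_ofReal_of_Ioo_subset_of_subset_Icc {s : Set ℝ} {a b : ℝ}
    (hIoo : Set.Ioo a b ⊆ s) (hIcc : s ⊆ Set.Icc a b) : volume s = ENNReal.ofReal (b - a) :=
  le_antisymm (Real.volume_Icc ▸ measure_mono hIcc) (Real.volume_Ioo ▸ measure_mono hIoo)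

lemma volume_biUnion_diff_biInter_phiInterval {ι : Type*} (F : Finset ι) (hF : F.Nonempty)
    (x : ι → ℝ) :
    volume ((⋃ i ∈ F, phiInterval (x i)) \ ⋂ i ∈ F, phiInterval (x i)) =
      ENNReal.ofReal (F.sup' hF x - F.inf' hF x) := by
  apply Real.volume_eq_ofReal_of_Ioo_subset_of_subset_Icc
  · intro y hy
    obtain ⟨i, hi, hi_eq⟩ := F.exists_mem_eq_inf' hF x
    obtain ⟨j, hj, hj_eq⟩ := F.exists_mem_eq_sup' hF x
    rw [hi_eq, hj_eq] at hy
    simp only [Set.mem_sdiff, Set.mem_iUnion₂, Set.mem_iInter₂, not_forall]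
    rcases mem_phiInterval_symmDiff_of_mem_Ioo hy with ⟨hyi, hyj⟩ | ⟨hyj, hyi⟩
    · exact ⟨⟨i, hi, hyi⟩, j, hj, hyj⟩
    · exact ⟨⟨j, hj, hyj⟩, i, hi, hyi⟩
  · simp only [Set.subset_def, Set.mem_sdiff, Set.mem_iUnion₂, Set.mem_iInter₂, not_forall]
    rintro y ⟨⟨i, hi, hyi⟩, j, hj, hyj⟩
    have bounds : ∀ k ∈ F, x k ∈ Set.Icc (F.inf' hF x) (F.sup' hF x) :=
      fun k hk => ⟨F.inf'_le x hk, F.le_sup' x hk⟩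
    exact Set.uIcc_subset_Icc (bounds i hi) (bounds j hj)
      (mem_uIcc_of_mem_phiInterval_of_notMem hyi hyj)

theorem l1_embeds_in_measureDiv_general {Ω : Type*} [MeasurableSpace Ω] (μ : Measure Ω)
    (F : Finset (Ω → ℝ))
    (hmeas : ∀ f ∈ F, Measurable f) :
    (∫ ω, (if h : F.Nonempty then
        F.sup' h (fun f => f ω) - F.inf' h (fun f => f ω) else 0) ∂μ) =
      ((μ.prod volume) ((⋃ f ∈ F, PhiSet f) \ ⋂ f ∈ F, PhiSet f)).toReal := by
  rcases F.eq_empty_or_nonempty with rfl | hF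
  · simp
  have hS : MeasurableSet ((⋃ f ∈ F, PhiSet f) \ ⋂ f ∈ F, PhiSet f) :=
    (MeasurableSet.biUnion F.countable_toSet fun f hf => measurableSet_phiSet (hmeas f hf)).diff
      (MeasurableSet.biInter F.countable_toSet fun f hf => measurableSet_phiSet (hmeas f hf))
  have hg_meas : Measurable fun ω => F.sup' hF (fun f => f ω) - F.inf' hF (fun f => f ω) := by
    simp only [← Finset.sup'_apply, ← Finset.inf'_apply]
    exact (F.measurable_sup' hF hmeas).sub (F.measurable_inf' hF hmeas)
  have hg_nonneg : 0 ≤ᵐ[μ] fun ω => F.sup' hF (fun f => f ω) - F.inf' hF (fun f => f ω) :=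
    ae_of_all _ fun ω => sub_nonneg.2 <|
      (F.inf'_le _ hF.choose_spec).trans (F.le_sup' (fun f => f ω) hF.choose_spec)
  simp only [dif_pos hF]
  rw [integral_eq_lintegral_of_nonneg_ae hg_nonneg hg_meas.aestronglyMeasurable,
    Measure.prod_apply hS]
  congr 1
  refine lintegral_congr fun ω => ?_
  rw [← volume_biUnion_diff_biInter_phiInterval F hF (fun f => f ω)]
  simp only [Set.preimage_sdiff, Set.preimage_iUnion₂, Set.preimage_iInter₂]
  rfl

/-- every L₁-embeddable diversity embeds isometrically into a
measure diversity: for integrable functions `f₁,…,f_k` on `Ω`,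
`∫ (maxᵢ fᵢ(ω) − minᵢ fᵢ(ω)) dμ(ω) = (μ×λ)(⋃ᵢ Φ(fᵢ) \ ⋂ᵢ Φ(fᵢ))`. -/
theorem l1_embeds_in_measureDiv {Ω : Type*} [MeasurableSpace Ω] (μ : Measure Ω)
    [SigmaFinite μ] (F : Finset (Ω → ℝ))
    (hint : ∀ f ∈ F, Integrable f μ) (hmeas : ∀ f ∈ F, Measurable f) :
    (∫ ω, (if h : F.Nonempty then
        F.sup' h (fun f => f ω) - F.inf' h (fun f => f ω) else 0) ∂μ) =
      ((μ.prod volume) ((⋃ f ∈ F, PhiSet f) \ ⋂ f ∈ F, PhiSet f)).toReal :=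
  l1_embeds_in_measureDiv_general μ F hmeas
end

section
/- Let C ⊆ 𝒫(X) be a chain of subsets of a finite set X all containing a fixed point x₀ and such that every x ∈ X is contained in some member of C, and let λ_U ≥ 0 for U ∈ C. Then the diversity δ^C(A) = Σ_{U ∈ C} λ_U δ_U(A) embeds isometrically into ℝ with the diameter diversity, via φ(x) = δ^C({x₀, x}). -/
/-!
For `U ∈ C`, the sets `{V ∈ C | x ∉ V}` grow strictly from a point `x ∈ U` to a point `y ∉ U`, so
maximizing and minimizing their size over `A` gives an outermost point `a` and an innermost point
`b` of `A` with respect to the chain. Every `U ∈ C` contains `x₀`, so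
`φ x = ∑_{U ∈ C, x ∉ U} λ_U` is monotone in this order and `diam φ(A) = φ a - φ b`, while `U` cuts
`A` exactly when `b ∈ U` and `a ∉ U`, i.e. exactly when `U` contributes `λ_U` to `φ a - φ b`.
-/

open Finset

/-- The cut diversity `δ_U`. -/
def cutDiv {X : Type*} [DecidableEq X] (U A : Finset X) : ℝ :=
  if (A ∩ U).Nonempty ∧ (A \ U).Nonempty then 1 else 0

section

variable {X : Type*} [DecidableEq X]

lemma cutDiv_pair_of_mem {U : Finset X} {x₀ : X} (hx₀ : x₀ ∈ U) (x : X) :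
    cutDiv U {x₀, x} = if x ∈ U then 0 else 1 := by
  by_cases hx : x ∈ U
  · have : ¬(({x₀, x} : Finset X) \ U).Nonempty := by
      simp [sdiff_nonempty, insert_subset_iff, hx₀, hx]
    simp [cutDiv, this, hx]
  · have h₁ : (({x₀, x} : Finset X) ∩ U).Nonempty := ⟨x₀, by simp [hx₀]⟩
    have h₂ : (({x₀, x} : Finset X) \ U).Nonempty := ⟨x, by simp [hx]⟩
    simp [cutDiv, h₁, h₂, hx]

lemma cutDiv_eq_of_extremal {U A : Finset X} {a b : X} (ha : a ∈ A) (hb : b ∈ A)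
    (hbU : ∀ x ∈ A, x ∈ U → b ∈ U) (haU : ∀ x ∈ A, a ∈ U → x ∈ U) :
    cutDiv U A = (if a ∈ U then 0 else 1) - (if b ∈ U then 0 else 1) := by
  by_cases haU' : a ∈ U
  · have : ¬(A \ U).Nonempty := fun ⟨x, hx⟩ =>
      (mem_sdiff.mp hx).2 (haU x (mem_sdiff.mp hx).1 haU')
    simp [cutDiv, this, haU', haU b hb haU']
  by_cases hbU' : b ∈ U
  · have h₁ : (A ∩ U).Nonempty := ⟨b, mem_inter.mpr ⟨hb, hbU'⟩⟩
    have h₂ : (A \ U).Nonempty := ⟨a, mem_sdiff.mpr ⟨ha, haU'⟩⟩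
    simp [cutDiv, h₁, h₂, haU', hbU']
  · have : ¬(A ∩ U).Nonempty := fun ⟨x, hx⟩ =>
      hbU' (hbU x (mem_inter.mp hx).1 (mem_inter.mp hx).2)
    simp [cutDiv, this, haU', hbU']

namespace IsChain

variable {C : Finset (Finset X)} (hC : IsChain (· ⊆ ·) (C : Set (Finset X)))
include hC

lemma filter_notMem_ssubset {U : Finset X} {x y : X} (hU : U ∈ C) (hx : x ∈ U) (hy : y ∉ U) :
    {V ∈ C | x ∉ V} ⊂ {V ∈ C | y ∉ V} := by
  have hsub : {V ∈ C | x ∉ V} ⊆ {V ∈ C | y ∉ V} := by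
    intro V hV
    obtain ⟨hVC, hxV⟩ := mem_filter.mp hV
    refine mem_filter.mpr ⟨hVC, fun hyV => ?_⟩
    rcases eq_or_ne V U with rfl | hne
    · exact hy hyV
    · rcases hC hVC hU hne with hVU | hUV
      · exact hy (hVU hyV)
      · exact hxV (hUV hx)
  exact (ssubset_iff_of_subset hsub).mpr
    ⟨U, mem_filter.mpr ⟨hU, hy⟩, fun h => (mem_filter.mp h).2 hx⟩

lemma exists_outermost {A : Finset X} (hA : A.Nonempty) :
    ∃ a ∈ A, ∀ x ∈ A, ∀ U ∈ C, a ∈ U → x ∈ U := by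
  obtain ⟨a, ha, hmax⟩ := A.exists_max_image (fun x => #{V ∈ C | x ∉ V}) hA
  refine ⟨a, ha, fun x hx U hU haU => ?_⟩
  by_contra hxU
  exact (card_lt_card (hC.filter_notMem_ssubset hU haU hxU)).not_ge (hmax x hx)

lemma exists_innermost {A : Finset X} (hA : A.Nonempty) :
    ∃ b ∈ A, ∀ x ∈ A, ∀ U ∈ C, x ∈ U → b ∈ U := by
  obtain ⟨b, hb, hmin⟩ := A.exists_min_image (fun x => #{V ∈ C | x ∉ V}) hA
  refine ⟨b, hb, fun x hx U hU hxU => ?_⟩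
  by_contra hbU
  exact (card_lt_card (hC.filter_notMem_ssubset hU hxU hbU)).not_ge (hmin x hx)

end IsChain

end

lemma dite_sup'_sub_inf'_image_eq {ι : Type*} {A : Finset ι} {g : ι → ℝ} {a b : ι}
    (ha : a ∈ A) (hb : b ∈ A) (hle : ∀ x ∈ A, g b ≤ g x ∧ g x ≤ g a) :
    (if h : (A.image g).Nonempty then (A.image g).sup' h id - (A.image g).inf' h id else 0)
      = g a - g b := by
  have h : (A.image g).Nonempty := ⟨g a, mem_image_of_mem g ha⟩
  rw [dif_pos h]
  congr 1
  · refine le_antisymm (sup'_le h id ?_) (le_sup' id (mem_image_of_mem g ha))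
    simpa using fun x hx => (hle x hx).2
  · refine le_antisymm (inf'_le id (mem_image_of_mem g hb)) (le_inf' h id ?_)
    simpa using fun x hx => (hle x hx).1

theorem chain_cut_diversity_embeds_in_R_general {X : Type*} [DecidableEq X]
    (C : Finset (Finset X)) (x₀ : X)
    (hchain : IsChain (· ⊆ ·) (C : Set (Finset X)))
    (hx₀ : ∀ U ∈ C, x₀ ∈ U)
    (lam : Finset X → ℝ) (hlam : ∀ U, 0 ≤ lam U) :
    let δC : Finset X → ℝ := fun A => ∑ U ∈ C, lam U * cutDiv U A
    let φ : X → ℝ := fun x => δC {x₀, x}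
    ∀ A : Finset X,
      (if h : (A.image φ).Nonempty then
        (A.image φ).sup' h id - (A.image φ).inf' h id else 0) = δC A := by
  intro δC φ A
  rcases A.eq_empty_or_nonempty with rfl | hA
  · simp [δC, cutDiv]
  obtain ⟨a, ha, haU⟩ := hchain.exists_outermost hA
  obtain ⟨b, hb, hbU⟩ := hchain.exists_innermost hA
  have hφ (x : X) : φ x = ∑ U ∈ C, lam U * (if x ∈ U then 0 else 1) :=
    sum_congr rfl fun U hU => by rw [cutDiv_pair_of_mem (hx₀ U hU)]
  have hmono {x y : X} (hxy : ∀ U ∈ C, y ∈ U → x ∈ U) : φ x ≤ φ y := by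
    rw [hφ x, hφ y]
    refine sum_le_sum fun U hU => mul_le_mul_of_nonneg_left ?_ (hlam U)
    by_cases hyU : y ∈ U <;> by_cases hxU : x ∈ U <;> simp_all
  have hbounds (x : X) (hx : x ∈ A) : φ b ≤ φ x ∧ φ x ≤ φ a :=
    ⟨hmono fun U hU => hbU x hx U hU, hmono fun U hU => haU x hx U hU⟩
  rw [dite_sup'_sub_inf'_image_eq ha hb hbounds, hφ a, hφ b, ← sum_sub_distrib]
  refine sum_congr rfl fun U hU => ?_
  rw [cutDiv_eq_of_extremal ha hb (fun x hx => hbU x hx U hU) (fun x hx => haU x hx U hU),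
    mul_sub]

/-- a nonnegative combination of cut diversities coming from a
chain of sets all containing `x₀` (and covering `X`) embeds isometrically into
the diameter diversity on `ℝ` via `φ(x) = δ^C({x₀, x})`. -/
theorem chain_cut_diversity_embeds_in_R {X : Type*} [DecidableEq X]
    (C : Finset (Finset X)) (x₀ : X)
    (hchain : IsChain (· ⊆ ·) (C : Set (Finset X)))
    (hx₀ : ∀ U ∈ C, x₀ ∈ U) (hcov : ∀ x : X, ∃ U ∈ C, x ∈ U)
    (lam : Finset X → ℝ) (hlam : ∀ U, 0 ≤ lam U) :
    let δC : Finset X → ℝ := fun A => ∑ U ∈ C, lam U * cutDiv U A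
    let φ : X → ℝ := fun x => δC {x₀, x}
    ∀ A : Finset X,
      (if h : (A.image φ).Nonempty then
        (A.image φ).sup' h id - (A.image φ).inf' h id else 0) = δC A :=
  chain_cut_diversity_embeds_in_R_general C x₀ hchain hx₀ lam hlam
end

section
/- Let δ_diam^{(1)} be the diameter diversity on ℝ^k with respect to the ℓ₁ metric and δ₁ the ℓ₁ diversity on ℝ^k. Then for all finite A ⊂ ℝ^k, δ_diam^{(1)}(A) ≤ δ₁(A) ≤ k·δ_diam^{(1)}(A), and both bounds are tight (e.g. equality in the upper bound for A = {±e₁, …, ±e_k}). -/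
/-!
For `a, b ∈ A`, `‖a - b‖₁ = ∑ᵢ |aᵢ - bᵢ|` is at most the sum of the coordinate widths of `A`,
and each `|aᵢ - bᵢ|` is at most `‖a - b‖₁`, so each of the `k` widths is at most the diameter.
Every set between `{±eᵢ}` and the unit `ℓ₁` ball has all coordinate widths and `ℓ₁` diameter
equal to `2`.
-/

open Finset

/-- The ℓ₁ diversity on `ℝ^k`. -/
noncomputable def l1Div {k : ℕ} (A : Finset (Fin k → ℝ)) : ℝ :=
  ∑ i : Fin k,
    if h : A.Nonempty then (A ×ˢ A).sup' (h.product h) (fun p => |p.1 i - p.2 i|) else 0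

/-- The diameter diversity on `ℝ^k` with respect to the ℓ₁ metric. -/
noncomputable def diamDiv1 {k : ℕ} (A : Finset (Fin k → ℝ)) : ℝ :=
  if h : A.Nonempty then
    (A ×ˢ A).sup' (h.product h) (fun p => ∑ i : Fin k, |p.1 i - p.2 i|) else 0

lemma abs_apply_le_sum_abs {ι : Type*} [Fintype ι] (x : ι → ℝ) (i : ι) :
    |x i| ≤ ∑ j, |x j| :=
  single_le_sum (fun j _ => abs_nonneg (x j)) (mem_univ i)

lemma sum_abs_sub_le_two {ι : Type*} [Fintype ι] {x y : ι → ℝ}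
    (hx : ∑ j, |x j| ≤ 1) (hy : ∑ j, |y j| ≤ 1) : ∑ j, |x j - y j| ≤ 2 :=
  calc ∑ j, |x j - y j| ≤ ∑ j, (|x j| + |y j|) := sum_le_sum fun j _ => abs_sub _ _
    _ ≤ 2 := by rw [sum_add_distrib]; linarith

lemma sum_abs_single_one {ι : Type*} [Fintype ι] [DecidableEq ι] (i : ι) :
    ∑ j, |(Pi.single i (1 : ℝ) : ι → ℝ) j| = 1 := by
  simp [Pi.single_apply, apply_ite]

lemma sum_abs_single_sub_neg_single {ι : Type*} [Fintype ι] [DecidableEq ι] (i : ι) :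
    ∑ j, |(Pi.single i (1 : ℝ) : ι → ℝ) j - (-Pi.single i (1 : ℝ) : ι → ℝ) j| = 2 := by
  simp only [Pi.neg_apply, sub_neg_eq_add, ← two_mul, abs_mul, ← mul_sum, sum_abs_single_one]
  norm_num

theorem diamDiv1_le_l1Div {k : ℕ} (A : Finset (Fin k → ℝ)) : diamDiv1 A ≤ l1Div A := by
  rw [diamDiv1]
  split_ifs with hA
  · refine sup'_le _ _ fun p hp => sum_le_sum fun i _ => ?_
    rw [dif_pos hA]
    exact le_sup' (fun p : (Fin k → ℝ) × (Fin k → ℝ) => |p.1 i - p.2 i|) hp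
  · simp [l1Div, hA]

theorem l1Div_le_mul_diamDiv1 {k : ℕ} (A : Finset (Fin k → ℝ)) :
    l1Div A ≤ k * diamDiv1 A := by
  rw [l1Div, diamDiv1]
  split_ifs with hA
  · calc ∑ i : Fin k, (A ×ˢ A).sup' _ (fun p => |p.1 i - p.2 i|)
        ≤ ∑ _i : Fin k, (A ×ˢ A).sup' _ (fun p => ∑ j, |p.1 j - p.2 j|) :=
          sum_le_sum fun i _ => sup'_le _ _ fun p hp =>
            (abs_apply_le_sum_abs (p.1 - p.2) i).trans
              (le_sup' (fun p : (Fin k → ℝ) × (Fin k → ℝ) => ∑ j, |p.1 j - p.2 j|) hp)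
      _ = k * (A ×ˢ A).sup' _ (fun p => ∑ j, |p.1 j - p.2 j|) := by
          rw [sum_const, card_univ, Fintype.card_fin, nsmul_eq_mul]
  · simp

section CrossPolytope

variable {k : ℕ} {A : Finset (Fin k → ℝ)}

theorem l1Div_eq_of_signed_basis_mem (hball : ∀ x ∈ A, ∑ j, |x j| ≤ 1)
    (hpos : ∀ i, Pi.single i 1 ∈ A) (hneg : ∀ i, -Pi.single i 1 ∈ A) :
    l1Div A = 2 * k := by
  have hwidth : ∀ i : Fin k, (if h : A.Nonempty then
      (A ×ˢ A).sup' (h.product h) (fun p => |p.1 i - p.2 i|) else 0) = 2 := fun i => by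
    rw [dif_pos ⟨_, hpos i⟩]
    refine le_antisymm (sup'_le _ _ fun p hp => ?_) ?_
    · rw [mem_product] at hp
      calc |p.1 i - p.2 i| ≤ ∑ j, |(p.1 - p.2) j| := abs_apply_le_sum_abs (p.1 - p.2) i
        _ ≤ 2 := sum_abs_sub_le_two (hball _ hp.1) (hball _ hp.2)
    · refine le_sup'_of_le _ (b := (Pi.single i 1, -Pi.single i 1))
        (mem_product.mpr ⟨hpos i, hneg i⟩) ?_
      norm_num
  rw [l1Div, sum_congr rfl fun i _ => hwidth i]
  simp [mul_comm]

theorem diamDiv1_eq_of_signed_basis_mem (hk : 0 < k) (hball : ∀ x ∈ A, ∑ j, |x j| ≤ 1)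
    (hpos : ∀ i, Pi.single i 1 ∈ A) (hneg : ∀ i, -Pi.single i 1 ∈ A) :
    diamDiv1 A = 2 := by
  let i₀ : Fin k := ⟨0, hk⟩
  rw [diamDiv1, dif_pos ⟨_, hpos i₀⟩]
  refine le_antisymm (sup'_le _ _ fun p hp => ?_) ?_
  · rw [mem_product] at hp
    exact sum_abs_sub_le_two (hball _ hp.1) (hball _ hp.2)
  · exact le_sup'_of_le _ (b := (Pi.single i₀ 1, -Pi.single i₀ 1)) (mem_product.mpr ⟨hpos i₀, hneg i₀⟩)
      (sum_abs_single_sub_neg_single i₀).ge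

end CrossPolytope

/-- `δ_diam^{(1)}(A) ≤ δ₁(A) ≤ k·δ_diam^{(1)}(A)` for all finite
`A ⊂ ℝ^k`, with the upper bound tight, attained at `A = {±e₁, …, ±e_k}`. -/
theorem l1Div_diamDiv1_bounds (k : ℕ) :
    (∀ A : Finset (Fin k → ℝ), diamDiv1 A ≤ l1Div A ∧ l1Div A ≤ (k : ℝ) * diamDiv1 A) ∧
    (0 < k →
      let E : Finset (Fin k → ℝ) :=
        (Finset.univ.image fun i : Fin k => Pi.single i (1 : ℝ)) ∪
          (Finset.univ.image fun i : Fin k => -Pi.single i (1 : ℝ))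
      l1Div E = (k : ℝ) * diamDiv1 E) := by
  refine ⟨fun A => ⟨diamDiv1_le_l1Div A, l1Div_le_mul_diamDiv1 A⟩, fun hk => ?_⟩
  intro E
  have hball : ∀ x ∈ E, ∑ j, |x j| ≤ 1 := by
    simp only [E, mem_union, mem_image, mem_univ, true_and]
    rintro x (⟨i, rfl⟩ | ⟨i, rfl⟩)
    · exact (sum_abs_single_one i).le
    · simpa only [Pi.neg_apply, abs_neg] using (sum_abs_single_one i).le
  have hpos : ∀ i, Pi.single i 1 ∈ E := fun i => by simp [E]
  have hneg : ∀ i, -Pi.single i 1 ∈ E := fun i => by simp [E]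
  rw [l1Div_eq_of_signed_basis_mem hball hpos hneg,
    diamDiv1_eq_of_signed_basis_mem hk hball hpos hneg]
  ring
end

section
/- Let X be a set of n points and δ the diversity on X with δ(A) = |A| − 1 for all nonempty A ⊆ X (and δ(∅) = 0). Then every embedding φ : X → ℝ^k has distortion at least (n − 1)/k with respect to the ℓ₁ diversity on ℝ^k. -/
/-!
Taking `A = X` gives `n - 1 ≤ c₁ δ₁(φ(X))`. Each summand of `δ₁(φ(X))` is the spread of `φ(X)`
along one axis; it is attained by a pair `φ x, φ y`, so it is at most
`δ₁(φ{x, y}) ≤ c₂ δ({x, y}) ≤ c₂`. Summing over the `k` axes, `δ₁(φ(X)) ≤ k c₂`.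
-/

open Finset

/-- The diversity `δ(A) = |A| − 1` on nonempty sets (and `δ(∅) = 0`). -/
noncomputable def cardDiv {X : Type*} (A : Finset X) : ℝ :=
  if A.Nonempty then (A.card : ℝ) - 1 else 0

section l1Div

variable {k : ℕ} {A : Finset (Fin k → ℝ)}

lemma abs_sub_le_l1Div {u v : Fin k → ℝ} (hu : u ∈ A) (hv : v ∈ A) (i : Fin k) :
    |u i - v i| ≤ l1Div A := by
  have hA : A.Nonempty := ⟨u, hu⟩
  have hterm : ∀ j : Fin k, |u j - v j| ≤
      if h : A.Nonempty then (A ×ˢ A).sup' (h.product h) (fun p => |p.1 j - p.2 j|) else 0 :=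
    fun j => by
      rw [dif_pos hA]
      exact le_sup' (fun p : (Fin k → ℝ) × (Fin k → ℝ) => |p.1 j - p.2 j|) (mk_mem_product hu hv)
  exact (hterm i).trans (single_le_sum (fun j _ => (abs_nonneg _).trans (hterm j)) (mem_univ i))

lemma l1Div_le_mul_of_forall_pair_le {C : ℝ} (hC : 0 ≤ C)
    (h : ∀ u ∈ A, ∀ v ∈ A, l1Div {u, v} ≤ C) : l1Div A ≤ k * C := by
  rw [l1Div]
  calc _ ≤ ∑ _i : Fin k, C := sum_le_sum fun i _ => ?_
    _ = k * C := by simp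
  split_ifs with hA
  · refine sup'_le _ _ fun p hp => ?_
    obtain ⟨hu, hv⟩ := mem_product.mp hp
    exact (abs_sub_le_l1Div (mem_insert_self _ _)
      (mem_insert_of_mem (mem_singleton_self _)) i).trans (h _ hu _ hv)
  · exact hC

end l1Div

lemma cardDiv_univ {X : Type*} [Fintype X] [Nonempty X] :
    cardDiv (univ : Finset X) = Fintype.card X - 1 := by
  rw [cardDiv, if_pos univ_nonempty, card_univ]

lemma cardDiv_pair_le_one {X : Type*} [DecidableEq X] (x y : X) : cardDiv {x, y} ≤ 1 := by
  have hcard : (({x, y} : Finset X).card : ℝ) ≤ 2 := by exact_mod_cast card_le_two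
  rw [cardDiv, if_pos (insert_nonempty _ _)]
  linarith

theorem cardDiv_distortion_lower_bound_general {X : Type*} [Fintype X]
    (k : ℕ) (φ : X → Fin k → ℝ) (c₁ c₂ : ℝ) (hc₁ : 0 < c₁) (hc₂ : 0 < c₂)
    (hemb : ∀ A : Finset X,
      (1 / c₁) * cardDiv A ≤ l1Div (A.image φ) ∧ l1Div (A.image φ) ≤ c₂ * cardDiv A) :
    ((Fintype.card X : ℝ) - 1) / (k : ℝ) ≤ c₁ * c₂ := by
  classical
  rcases isEmpty_or_nonempty X with hX | hX
  · have hneg : (Fintype.card X : ℝ) - 1 ≤ 0 := by simp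
    exact (div_nonpos_of_nonpos_of_nonneg hneg k.cast_nonneg).trans (by positivity)
  have hpair : ∀ u ∈ univ.image φ, ∀ v ∈ univ.image φ, l1Div {u, v} ≤ c₂ := by
    simp only [mem_image, mem_univ, true_and, forall_exists_index, forall_apply_eq_imp_iff]
    intro x y
    calc l1Div {φ x, φ y} = l1Div (({x, y} : Finset X).image φ) := by simp [image_insert]
      _ ≤ c₂ * cardDiv {x, y} := (hemb _).2
      _ ≤ c₂ := mul_le_of_le_one_right hc₂.le (cardDiv_pair_le_one x y)
  have hlow := (hemb univ).1
  rw [cardDiv_univ] at hlow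
  refine div_le_of_le_mul₀ k.cast_nonneg (by positivity) ?_
  calc (Fintype.card X : ℝ) - 1 = c₁ * (1 / c₁ * (Fintype.card X - 1)) := by field_simp
    _ ≤ c₁ * (k * c₂) :=
      mul_le_mul_of_nonneg_left (hlow.trans (l1Div_le_mul_of_forall_pair_le hc₂.le hpair)) hc₁.le
    _ = c₁ * c₂ * k := by ring

/-- any embedding of the `n`-point diversity `δ(A) = |A| − 1` into
the ℓ₁ diversity on `ℝ^k` has distortion `c₁·c₂` at least `(n − 1)/k`. -/
theorem cardDiv_distortion_lower_bound {X : Type*} [Fintype X] [DecidableEq X]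
    (k : ℕ) (hk : 0 < k) (φ : X → Fin k → ℝ) (c₁ c₂ : ℝ) (hc₁ : 0 < c₁) (hc₂ : 0 < c₂)
    (hemb : ∀ A : Finset X,
      (1 / c₁) * cardDiv A ≤ l1Div (A.image φ) ∧ l1Div (A.image φ) ≤ c₂ * cardDiv A) :
    ((Fintype.card X : ℝ) - 1) / (k : ℝ) ≤ c₁ * c₂ :=
  cardDiv_distortion_lower_bound_general k φ c₁ c₂ hc₁ hc₂ hemb
end
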